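/- arXiv:2402.05562 — 3 statements merged into one kernel-verified Lean document; each statement's English description precedes it below -/
import Mathlib

section
/- Let A be an invertible real n×n matrix, V, W real n×m matrices with WᵀAV invertible, and Ψ a symmetric positive semidefinite real n×n matrix with WᵀAΨ = 0. Set Σ₀ = VVᵀ + Ψ. Then for all vectors x₀, b ∈ ℝⁿ, the Bayesian posterior mean x₀ + Σ₀AᵀW(WᵀAΣ₀AᵀW)⁻¹Wᵀ(b − Ax₀) equals the projection-method approximation x₀ + V(WᵀAV)⁻¹Wᵀ(b − Ax₀). -/
open Matrix

/-! The hypothesis `WᵀAΨ = 0` (and symmetry of `Ψ`) makes `Ψ` invisible to the test matrix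
`X = WᵀA`, so with `M = WᵀAV` the prior covariance enters only through
`Σ₀Xᵀ = VMᵀ` and `XΣ₀Xᵀ = MMᵀ`. The posterior gain is therefore `VMᵀ(MMᵀ)⁻¹ = VM⁻¹`. -/

theorem Matrix.transpose_mul_inv_mul_transpose {κ R : Type*} [Fintype κ] [DecidableEq κ]
    [CommRing R] {M : Matrix κ κ R} (hM : IsUnit M) : Mᵀ * (M * Mᵀ)⁻¹ = M⁻¹ := by
  have hMdet : IsUnit Mᵀ.det := (isUnit_iff_isUnit_det _).mp ((isUnit_transpose M).mpr hM)
  rw [mul_inv_rev, ← Matrix.mul_assoc, mul_nonsing_inv _ hMdet, Matrix.one_mul]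

theorem prior_gain_eq_projection_gain {ι κ R : Type*} [Fintype ι] [Fintype κ] [DecidableEq κ]
    [CommRing R] (X : Matrix κ ι R) (V : Matrix ι κ R) (Ψ : Matrix ι ι R) (hΨ : Ψᵀ = Ψ)
    (hXΨ : X * Ψ = 0) (hXV : IsUnit (X * V)) :
    (V * Vᵀ + Ψ) * Xᵀ * (X * (V * Vᵀ + Ψ) * Xᵀ)⁻¹ = V * (X * V)⁻¹ := by
  have hCovX : (V * Vᵀ + Ψ) * Xᵀ = V * (X * V)ᵀ := by
    rw [Matrix.add_mul, ← hΨ, ← transpose_mul, hXΨ, transpose_zero, add_zero, transpose_mul,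
      Matrix.mul_assoc]
  have hXCovX : X * (V * Vᵀ + Ψ) * Xᵀ = X * V * (X * V)ᵀ := by
    rw [Matrix.mul_assoc, hCovX, ← Matrix.mul_assoc]
  rw [hCovX, hXCovX, Matrix.mul_assoc, transpose_mul_inv_mul_transpose hXV]

theorem stmt_1_general {n m : ℕ} (A : Matrix (Fin n) (Fin n) ℝ)
    (V W : Matrix (Fin n) (Fin m) ℝ) (Ψ : Matrix (Fin n) (Fin n) ℝ)
    (hWAV : IsUnit (Wᵀ * A * V)) (hΨ : Ψ.PosSemidef)
    (hWAΨ : Wᵀ * A * Ψ = 0) :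
    ∀ x₀ b : Fin n → ℝ,
      x₀ + ((V * Vᵀ + Ψ) * Aᵀ * W * (Wᵀ * A * (V * Vᵀ + Ψ) * Aᵀ * W)⁻¹ * Wᵀ) *ᵥ
          (b - A *ᵥ x₀)
        = x₀ + (V * (Wᵀ * A * V)⁻¹ * Wᵀ) *ᵥ (b - A *ᵥ x₀) := by
  have hgain : (V * Vᵀ + Ψ) * Aᵀ * W * (Wᵀ * A * (V * Vᵀ + Ψ) * Aᵀ * W)⁻¹
      = V * (Wᵀ * A * V)⁻¹ := by
    simpa only [transpose_mul, transpose_transpose, Matrix.mul_assoc] using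
      prior_gain_eq_projection_gain (Wᵀ * A) V Ψ hΨ.1 hWAΨ hWAV
  intro x₀ b
  rw [hgain]

/-- With `Σ₀ = VVᵀ + Ψ`, the Bayesian posterior mean equals the
projection-method approximation `x₀ + V(WᵀAV)⁻¹Wᵀ(b − Ax₀)`. -/
theorem stmt_1 {n m : ℕ} (A : Matrix (Fin n) (Fin n) ℝ)
    (V W : Matrix (Fin n) (Fin m) ℝ) (Ψ : Matrix (Fin n) (Fin n) ℝ)
    (hA : IsUnit A) (hWAV : IsUnit (Wᵀ * A * V)) (hΨ : Ψ.PosSemidef)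
    (hWAΨ : Wᵀ * A * Ψ = 0) :
    ∀ x₀ b : Fin n → ℝ,
      x₀ + ((V * Vᵀ + Ψ) * Aᵀ * W * (Wᵀ * A * (V * Vᵀ + Ψ) * Aᵀ * W)⁻¹ * Wᵀ) *ᵥ
          (b - A *ᵥ x₀)
        = x₀ + (V * (Wᵀ * A * V)⁻¹ * Wᵀ) *ᵥ (b - A *ᵥ x₀) :=
  stmt_1_general A V W Ψ hWAV hΨ hWAΨ
end

section
/- Let A be an invertible real n×n matrix, V, W real n×m matrices with WᵀAV invertible, and Ψ a symmetric positive semidefinite real n×n matrix with WᵀAΨ = 0. Set Σ₀ = VVᵀ + Ψ. Then the Bayesian posterior covariance Σ₀ − Σ₀AᵀW(WᵀAΣ₀AᵀW)⁻¹WᵀAΣ₀ equals Ψ. -/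
/-!
With `B = WᵀA` and `M = BV`, the condition `BΨ = 0` (and symmetry of `Ψ`) gives
`Σ₀Bᵀ = VMᵀ`, `BΣ₀ = MVᵀ` and `BΣ₀Bᵀ = MMᵀ`, so the correction term is
`VMᵀ(MMᵀ)⁻¹MVᵀ = VVᵀ`, leaving `Σ₀ - VVᵀ = Ψ`.
-/

open Matrix

theorem Matrix.mul_transpose_mul_inv_mul_mul_transpose_cancel {R n k : Type*} [CommRing R]
    [Fintype k] [DecidableEq k] (V : Matrix n k R) {M : Matrix k k R} (hM : IsUnit M) :
    V * Mᵀ * (M * Mᵀ)⁻¹ * (M * Vᵀ) = V * Vᵀ := by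
  have hMdet : IsUnit M.det := (isUnit_iff_isUnit_det M).mp hM
  have hMtdet : IsUnit Mᵀ.det := by rwa [det_transpose]
  rw [Matrix.mul_inv_rev]
  calc V * Mᵀ * (Mᵀ⁻¹ * M⁻¹) * (M * Vᵀ)
      = V * ((Mᵀ * Mᵀ⁻¹) * ((M⁻¹ * M) * Vᵀ)) := by simp only [Matrix.mul_assoc]
    _ = V * Vᵀ := by
      rw [mul_nonsing_inv _ hMtdet, nonsing_inv_mul _ hMdet, Matrix.one_mul, Matrix.one_mul]

theorem Matrix.add_sub_mul_transpose_mul_inv_mul_eq {R n k : Type*} [CommRing R] [Fintype n]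
    [Fintype k] [DecidableEq k] (B : Matrix k n R) (V : Matrix n k R) (Ψ : Matrix n n R)
    (hΨ : Ψᵀ = Ψ) (hBΨ : B * Ψ = 0) (hBV : IsUnit (B * V)) :
    (V * Vᵀ + Ψ) - (V * Vᵀ + Ψ) * Bᵀ * (B * (V * Vᵀ + Ψ) * Bᵀ)⁻¹ * (B * (V * Vᵀ + Ψ)) = Ψ := by
  have hΨB : Ψ * Bᵀ = 0 := by rw [← hΨ, ← transpose_mul, hBΨ, transpose_zero]
  have hleft : (V * Vᵀ + Ψ) * Bᵀ = V * (B * V)ᵀ := by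
    rw [Matrix.add_mul, hΨB, add_zero, transpose_mul, Matrix.mul_assoc]
  have hright : B * (V * Vᵀ + Ψ) = B * V * Vᵀ := by
    rw [Matrix.mul_add, hBΨ, add_zero, Matrix.mul_assoc]
  have hmid : B * (V * Vᵀ + Ψ) * Bᵀ = B * V * (B * V)ᵀ := by
    rw [hright, Matrix.mul_assoc, ← transpose_mul]
  rw [hleft, hmid, hright, mul_transpose_mul_inv_mul_mul_transpose_cancel V hBV]
  abel

theorem stmt_2_general {n m : ℕ} (A : Matrix (Fin n) (Fin n) ℝ)
    (V W : Matrix (Fin n) (Fin m) ℝ) (Ψ : Matrix (Fin n) (Fin n) ℝ)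
    (hWAV : IsUnit (Wᵀ * A * V)) (hΨ : Ψ.PosSemidef)
    (hWAΨ : Wᵀ * A * Ψ = 0) :
    (V * Vᵀ + Ψ) -
        (V * Vᵀ + Ψ) * Aᵀ * W * (Wᵀ * A * (V * Vᵀ + Ψ) * Aᵀ * W)⁻¹ * Wᵀ * A * (V * Vᵀ + Ψ)
      = Ψ := by
  have hΨsymm : Ψᵀ = Ψ := by
    simpa [conjTranspose_eq_transpose_of_trivial] using hΨ.isHermitian.eq
  have hposterior := add_sub_mul_transpose_mul_inv_mul_eq (Wᵀ * A) V Ψ hΨsymm hWAΨ hWAV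
  simpa only [transpose_mul, transpose_transpose, Matrix.mul_assoc] using hposterior

/-- With `Σ₀ = VVᵀ + Ψ`, the Bayesian posterior covariance
`Σ₀ − Σ₀AᵀW(WᵀAΣ₀AᵀW)⁻¹WᵀAΣ₀` equals `Ψ`. -/
theorem stmt_2 {n m : ℕ} (A : Matrix (Fin n) (Fin n) ℝ)
    (V W : Matrix (Fin n) (Fin m) ℝ) (Ψ : Matrix (Fin n) (Fin n) ℝ)
    (hA : IsUnit A) (hWAV : IsUnit (Wᵀ * A * V)) (hΨ : Ψ.PosSemidef)
    (hWAΨ : Wᵀ * A * Ψ = 0) :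
    (V * Vᵀ + Ψ) -
        (V * Vᵀ + Ψ) * Aᵀ * W * (Wᵀ * A * (V * Vᵀ + Ψ) * Aᵀ * W)⁻¹ * Wᵀ * A * (V * Vᵀ + Ψ)
      = Ψ :=
  stmt_2_general A V W Ψ hWAV hΨ hWAΨ
end

section
/- Let A be a symmetric positive definite real n×n matrix, u₁, …, u_K ∈ ℝⁿ (K ≤ n) vectors with uⱼᵀAu_k = δ_{jk}, d₁ ≥ d₂ ≥ … ≥ d_K > 0, B = Σ_{j=1}^{K} dⱼ uⱼuⱼᵀ, and for m < K let B_m = Σ_{j=1}^{m} dⱼ uⱼuⱼᵀ. Then B_m is an optimal rank-m approximation to B in the norm ‖·‖_{A,A⁻¹}: (i) ‖B − B_m‖_{A,A⁻¹} = d_{m+1}, i.e. ‖(B − B_m)x‖_A ≤ d_{m+1}‖x‖_{A⁻¹} for all x with equality for some x ≠ 0; and (ii) for every real n×n matrix C with rank(C) ≤ m, there exists x ≠ 0 with ‖(B − C)x‖_A ≥ d_{m+1}‖x‖_{A⁻¹}, so ‖B − C‖_{A,A⁻¹} ≥ d_{m+1}. -/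
/-!
Write `x = A y`, so that `‖x‖²_{A⁻¹} = yᵀAy` and the `uⱼᵀx = uⱼᵀAy` are the coordinates of
`y` along the `A`-orthonormal family `(uⱼ)`. For `M = Σ_{j ∈ s} dⱼ uⱼuⱼᵀ` we have
`Mx = Σ_{j ∈ s} dⱼ (uⱼᵀx) uⱼ`, hence `‖Mx‖²_A = Σ_{j ∈ s} dⱼ² (uⱼᵀx)²`.

(i) For `s = {j > m}` this is at most `d_{m+1}² Σⱼ (uⱼᵀx)² ≤ d_{m+1}² ‖x‖²_{A⁻¹}` by
Bessel's inequality, with equality at `x = A u_{m+1}`.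

(ii) `rank (C A) ≤ m`, so `C A` kills some `y ≠ 0` in the `(m+1)`-dimensional span of
`u₁, …, u_{m+1}`. For `x = A y` we have `(B - C) x = B x`, the coordinates `uⱼᵀAy` vanish
for `j > m + 1`, and Parseval gives `‖Bx‖²_A = Σ_{j ≤ m+1} dⱼ² (uⱼᵀAy)² ≥ d_{m+1}² yᵀAy`.
Indices start at `0` in Lean, so `d_{m+1}` is `d ⟨m, hm⟩`.
-/

open Matrix

theorem sum_smul_vecMulVec_mulVec {R n ι : Type*} [CommRing R] [Fintype n] {u : ι → n → R}
    (s : Finset ι) (d : ι → R) (x : n → R) :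
    (∑ j ∈ s, d j • vecMulVec (u j) (u j)) *ᵥ x = ∑ j ∈ s, (d j * (u j ⬝ᵥ x)) • u j := by
  simp only [sum_mulVec, smul_mulVec, vecMulVec_mulVec, op_smul_eq_smul, smul_smul]

theorem LinearIndependent.finrank_span_image_finset {K V ι : Type*} [Field K] [AddCommGroup V]
    [Module K V] {u : ι → V} (hu : LinearIndependent K u) (s : Finset ι) :
    Module.finrank K (Submodule.span K (u '' s)) = s.card := by
  rw [← Subtype.range_coe (s := (s : Set ι)), ← Set.range_comp,
    finrank_span_eq_card (hu.comp _ Subtype.val_injective)]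
  simp

theorem Matrix.exists_mem_ne_zero_mulVec_eq_zero_of_rank_lt {K m n : Type*} [Field K]
    [Fintype n] (C : Matrix m n K) {W : Submodule K (n → K)}
    (h : C.rank < Module.finrank K W) : ∃ y ∈ W, y ≠ 0 ∧ C *ᵥ y = 0 := by
  set f := C.mulVecLin.domRestrict W
  have hrange : Module.finrank K (LinearMap.range f) ≤ C.rank :=
    Submodule.finrank_mono (LinearMap.range_domRestrict_le_range _ _)
  have hker : 0 < Module.finrank K (LinearMap.ker f) := by
    have := f.finrank_range_add_finrank_ker
    omega
  obtain ⟨⟨y, hyW⟩, hy, hy0⟩ := Submodule.exists_mem_ne_zero_of_ne_bot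
    (Submodule.one_le_finrank_iff.1 hker)
  exact ⟨y, hyW, fun h => hy0 (Subtype.ext h), hy⟩

theorem mulVec_dotProduct_inv_mulVec_mulVec {R n : Type*} [CommRing R] [Fintype n]
    [DecidableEq n] {A : Matrix n n R} (hA : IsUnit A) (y : n → R) :
    (A *ᵥ y) ⬝ᵥ (A⁻¹ *ᵥ (A *ᵥ y)) = y ⬝ᵥ (A *ᵥ y) := by
  rw [mulVec_mulVec, nonsing_inv_mul _ ((isUnit_iff_isUnit_det A).1 hA), one_mulVec,
    dotProduct_comm]

section Orthonormal

variable {R n ι : Type*} [CommRing R] [Fintype n] [DecidableEq ι]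
  {A : Matrix n n R} {u : ι → n → R}
  (hu : ∀ j k, u j ⬝ᵥ (A *ᵥ u k) = if j = k then 1 else 0)
include hu

theorem dotProduct_mulVec_sum_smul (s : Finset ι) (c : ι → R) (k : ι) :
    u k ⬝ᵥ (A *ᵥ ∑ j ∈ s, c j • u j) = if k ∈ s then c k else 0 := by
  simp [mulVec_sum, dotProduct_sum, mulVec_smul, hu]

theorem sum_smul_dotProduct_mulVec_sum_smul (s : Finset ι) (c : ι → R) :
    (∑ j ∈ s, c j • u j) ⬝ᵥ (A *ᵥ ∑ j ∈ s, c j • u j) = ∑ j ∈ s, c j ^ 2 := by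
  rw [sum_dotProduct]
  refine Finset.sum_congr rfl fun j hj => ?_
  rw [smul_dotProduct, dotProduct_mulVec_sum_smul hu, if_pos hj, smul_eq_mul, sq]

theorem quadForm_sum_smul_vecMulVec_mulVec (s : Finset ι) (d : ι → R) (x : n → R) :
    ((∑ j ∈ s, d j • vecMulVec (u j) (u j)) *ᵥ x) ⬝ᵥ
        (A *ᵥ ((∑ j ∈ s, d j • vecMulVec (u j) (u j)) *ᵥ x)) =
      ∑ j ∈ s, (d j * (u j ⬝ᵥ x)) ^ 2 := by
  rw [sum_smul_vecMulVec_mulVec, sum_smul_dotProduct_mulVec_sum_smul hu]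

theorem linearIndependent_of_dotProduct_mulVec [Fintype ι] : LinearIndependent R u := by
  refine Fintype.linearIndependent_iff.2 fun c hc k => ?_
  simpa [hc] using (dotProduct_mulVec_sum_smul hu Finset.univ c k).symm

theorem dotProduct_mulVec_eq_zero_of_mem_span_image {s : Set ι} {y : n → R}
    (hy : y ∈ Submodule.span R (u '' s)) {k : ι} (hk : k ∉ s) : u k ⬝ᵥ (A *ᵥ y) = 0 := by
  induction hy using Submodule.span_induction with
  | mem x hx =>
    obtain ⟨j, hj, rfl⟩ := hx
    rw [hu, if_neg (by rintro rfl; exact hk hj)]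
  | zero => simp
  | add x y _ _ hx hy => simp [mulVec_add, hx, hy]
  | smul a x _ hx => simp [mulVec_smul, hx]

theorem dotProduct_mulVec_self_eq_sum_sq_of_mem_span [Fintype ι] {y : n → R}
    (hy : y ∈ Submodule.span R (Set.range u)) :
    y ⬝ᵥ (A *ᵥ y) = ∑ j, (u j ⬝ᵥ (A *ᵥ y)) ^ 2 := by
  obtain ⟨c, rfl⟩ := (Submodule.mem_span_range_iff_exists_fun R).1 hy
  simp [sum_smul_dotProduct_mulVec_sum_smul hu, dotProduct_mulVec_sum_smul hu]

end Orthonormal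

section Real

variable {n ι : Type*} [Fintype n] [DecidableEq n] [Fintype ι] [DecidableEq ι]
  {A : Matrix n n ℝ} {u : ι → n → ℝ}
  (hu : ∀ j k, u j ⬝ᵥ (A *ᵥ u k) = if j = k then 1 else 0)
include hu

omit [DecidableEq n] in
theorem sum_sq_dotProduct_mulVec_le (hA : A.PosSemidef) (y : n → ℝ) :
    ∑ j, (u j ⬝ᵥ (A *ᵥ y)) ^ 2 ≤ y ⬝ᵥ (A *ᵥ y) := by
  set p := ∑ j, (u j ⬝ᵥ (A *ᵥ y)) • u j
  have hpp : p ⬝ᵥ (A *ᵥ p) = ∑ j, (u j ⬝ᵥ (A *ᵥ y)) ^ 2 :=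
    sum_smul_dotProduct_mulVec_sum_smul hu _ _
  have hpy : p ⬝ᵥ (A *ᵥ y) = ∑ j, (u j ⬝ᵥ (A *ᵥ y)) ^ 2 := by simp [p, sum_dotProduct, sq]
  have hyp : y ⬝ᵥ (A *ᵥ p) = p ⬝ᵥ (A *ᵥ y) := by
    rw [dotProduct_mulVec, ← mulVec_transpose, (isHermitian_iff_isSymm.1 hA.isHermitian).eq,
      dotProduct_comm]
  have hexpand : (y - p) ⬝ᵥ (A *ᵥ (y - p)) =
      y ⬝ᵥ (A *ᵥ y) - ∑ j, (u j ⬝ᵥ (A *ᵥ y)) ^ 2 := by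
    rw [mulVec_sub, sub_dotProduct, dotProduct_sub, dotProduct_sub, hyp, hpp, hpy]
    ring
  have hnonneg := hA.dotProduct_mulVec_nonneg (y - p)
  rw [star_trivial, hexpand] at hnonneg
  linarith

theorem sum_sq_dotProduct_le_dotProduct_inv_mulVec (hA : A.PosDef) (x : n → ℝ) :
    ∑ j, (u j ⬝ᵥ x) ^ 2 ≤ x ⬝ᵥ (A⁻¹ *ᵥ x) := by
  obtain ⟨y, rfl⟩ := mulVec_surjective_iff_isUnit.2 hA.isUnit x
  rw [mulVec_dotProduct_inv_mulVec_mulVec hA.isUnit]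
  exact sum_sq_dotProduct_mulVec_le hu hA.posSemidef y

theorem quadForm_sum_smul_vecMulVec_mulVec_le (hA : A.PosDef) {s : Finset ι} {d : ι → ℝ}
    {D : ℝ} (hd : ∀ j ∈ s, 0 ≤ d j ∧ d j ≤ D) (x : n → ℝ) :
    ((∑ j ∈ s, d j • vecMulVec (u j) (u j)) *ᵥ x) ⬝ᵥ
        (A *ᵥ ((∑ j ∈ s, d j • vecMulVec (u j) (u j)) *ᵥ x)) ≤
      D ^ 2 * (x ⬝ᵥ (A⁻¹ *ᵥ x)) := by
  rw [quadForm_sum_smul_vecMulVec_mulVec hu]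
  calc ∑ j ∈ s, (d j * (u j ⬝ᵥ x)) ^ 2
      ≤ ∑ j ∈ s, D ^ 2 * (u j ⬝ᵥ x) ^ 2 := Finset.sum_le_sum fun j hj => by
        rw [mul_pow]
        gcongr
        exacts [(hd j hj).1, (hd j hj).2]
    _ ≤ ∑ j, D ^ 2 * (u j ⬝ᵥ x) ^ 2 :=
        Finset.sum_le_sum_of_subset_of_nonneg (Finset.subset_univ s) fun _ _ _ => by positivity
    _ ≤ D ^ 2 * (x ⬝ᵥ (A⁻¹ *ᵥ x)) := by
        rw [← Finset.mul_sum]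
        gcongr
        exact sum_sq_dotProduct_le_dotProduct_inv_mulVec hu hA x

omit [DecidableEq n] in
theorem le_quadForm_sum_smul_vecMulVec_mulVec_mulVec {s : Set ι} {d : ι → ℝ} {D : ℝ}
    (hD : 0 ≤ D) (hd : ∀ j ∈ s, D ≤ d j) {y : n → ℝ}
    (hy : y ∈ Submodule.span ℝ (u '' s)) :
    D ^ 2 * (y ⬝ᵥ (A *ᵥ y)) ≤
      ((∑ j, d j • vecMulVec (u j) (u j)) *ᵥ (A *ᵥ y)) ⬝ᵥ
        (A *ᵥ ((∑ j, d j • vecMulVec (u j) (u j)) *ᵥ (A *ᵥ y))) := by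
  rw [quadForm_sum_smul_vecMulVec_mulVec hu, dotProduct_mulVec_self_eq_sum_sq_of_mem_span hu
    (Submodule.span_mono (Set.image_subset_range _ _) hy), Finset.mul_sum]
  refine Finset.sum_le_sum fun j _ => ?_
  by_cases hj : j ∈ s
  · rw [mul_pow]
    gcongr
    exact hd j hj
  · simp [dotProduct_mulVec_eq_zero_of_mem_span_image hu hy hj]

end Real

theorem stmt_18_general {n K : ℕ}
    (A : Matrix (Fin n) (Fin n) ℝ) (hA : A.PosDef)
    (u : Fin K → Fin n → ℝ)
    (horth : ∀ j k : Fin K, u j ⬝ᵥ (A *ᵥ u k) = if j = k then 1 else 0)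
    (d : Fin K → ℝ) (hd : ∀ i j : Fin K, i ≤ j → d j ≤ d i) (hdpos : ∀ j, 0 < d j)
    (m : ℕ) (hm : m < K)
    (B Bm : Matrix (Fin n) (Fin n) ℝ)
    (hB : B = ∑ j : Fin K, d j • vecMulVec (u j) (u j))
    (hBm : Bm = ∑ j ∈ Finset.univ.filter (fun j : Fin K => (j : ℕ) < m),
        d j • vecMulVec (u j) (u j)) :
    ((∀ x : Fin n → ℝ,
        Real.sqrt (((B - Bm) *ᵥ x) ⬝ᵥ (A *ᵥ ((B - Bm) *ᵥ x))) ≤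
          d ⟨m, hm⟩ * Real.sqrt (x ⬝ᵥ (A⁻¹ *ᵥ x))) ∧
      ∃ x : Fin n → ℝ, x ≠ 0 ∧
        Real.sqrt (((B - Bm) *ᵥ x) ⬝ᵥ (A *ᵥ ((B - Bm) *ᵥ x))) =
          d ⟨m, hm⟩ * Real.sqrt (x ⬝ᵥ (A⁻¹ *ᵥ x))) ∧
    ∀ C : Matrix (Fin n) (Fin n) ℝ, C.rank ≤ m →
      ∃ x : Fin n → ℝ, x ≠ 0 ∧
        d ⟨m, hm⟩ * Real.sqrt (x ⬝ᵥ (A⁻¹ *ᵥ x)) ≤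
          Real.sqrt (((B - C) *ᵥ x) ⬝ᵥ (A *ᵥ ((B - C) *ᵥ x))) := by
  set m₀ : Fin K := ⟨m, hm⟩
  have hBBm : B - Bm = ∑ j ∈ Finset.univ.filter (fun j : Fin K => ¬ (j : ℕ) < m),
      d j • vecMulVec (u j) (u j) := by
    rw [hB, hBm, ← Finset.sum_filter_add_sum_filter_not Finset.univ (fun j : Fin K => (j : ℕ) < m),
      add_sub_cancel_left]
  have sqrt_sq_mul (a : ℝ) : √(d m₀ ^ 2 * a) = d m₀ * √a := by
    rw [Real.sqrt_mul (sq_nonneg _), Real.sqrt_sq (hdpos m₀).le]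
  have hAu : (A *ᵥ u m₀) ⬝ᵥ (A⁻¹ *ᵥ (A *ᵥ u m₀)) = 1 := by
    rw [mulVec_dotProduct_inv_mulVec_mulVec hA.isUnit, horth, if_pos rfl]
  refine ⟨⟨fun x => ?_, A *ᵥ u m₀, fun h => by simp [h] at hAu, ?_⟩, fun C hC => ?_⟩
  · rw [hBBm, ← sqrt_sq_mul]
    refine Real.sqrt_le_sqrt (quadForm_sum_smul_vecMulVec_mulVec_le horth hA (fun j hj => ?_) x)
    exact ⟨(hdpos j).le, hd m₀ j (by simpa [Fin.le_def, m₀] using hj)⟩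
  · rw [hBBm, quadForm_sum_smul_vecMulVec_mulVec horth, hAu, Real.sqrt_one, mul_one]
    simp [horth, m₀, Real.sqrt_sq (hdpos m₀).le]
  · obtain ⟨y, hyW, hy0, hCy⟩ := (C * A).exists_mem_ne_zero_mulVec_eq_zero_of_rank_lt
      (W := Submodule.span ℝ (u '' ↑(Finset.Iic m₀))) <| by
        rw [(linearIndependent_of_dotProduct_mulVec horth).finrank_span_image_finset, Fin.card_Iic]
        exact (rank_mul_le_left C A).trans_lt (by simpa [m₀] using Nat.lt_succ_of_le hC)
    refine ⟨A *ᵥ y, fun h => hy0 (mulVec_injective_of_isUnit hA.isUnit (by rwa [mulVec_zero])), ?_⟩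
    rw [sub_mulVec, mulVec_mulVec y C A, hCy, sub_zero,
      mulVec_dotProduct_inv_mulVec_mulVec hA.isUnit, ← sqrt_sq_mul, hB]
    exact Real.sqrt_le_sqrt (le_quadForm_sum_smul_vecMulVec_mulVec_mulVec horth (hdpos m₀).le
      (fun j hj => hd j m₀ (by simpa using hj)) hyW)

/-- With `B = Σ_{j=1}^{K} dⱼuⱼuⱼᵀ` and `B_m = Σ_{j=1}^{m} dⱼuⱼuⱼᵀ`
(`m < K`), `B_m` is an optimal rank-`m` approximation to `B` in `‖·‖_{A,A⁻¹}`: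
(i) `‖B − B_m‖_{A,A⁻¹} = d_{m+1}` (the bound holds for all `x` and is attained), and
(ii) for any `C` of rank ≤ `m` there is `x ≠ 0` with
`‖(B − C)x‖_A ≥ d_{m+1}‖x‖_{A⁻¹}`. -/
theorem stmt_18 {n K : ℕ} (hKn : K ≤ n)
    (A : Matrix (Fin n) (Fin n) ℝ) (hA : A.PosDef)
    (u : Fin K → Fin n → ℝ)
    (horth : ∀ j k : Fin K, u j ⬝ᵥ (A *ᵥ u k) = if j = k then 1 else 0)
    (d : Fin K → ℝ) (hd : ∀ i j : Fin K, i ≤ j → d j ≤ d i) (hdpos : ∀ j, 0 < d j)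
    (m : ℕ) (hm : m < K)
    (B Bm : Matrix (Fin n) (Fin n) ℝ)
    (hB : B = ∑ j : Fin K, d j • vecMulVec (u j) (u j))
    (hBm : Bm = ∑ j ∈ Finset.univ.filter (fun j : Fin K => (j : ℕ) < m),
        d j • vecMulVec (u j) (u j)) :
    ((∀ x : Fin n → ℝ,
        Real.sqrt (((B - Bm) *ᵥ x) ⬝ᵥ (A *ᵥ ((B - Bm) *ᵥ x))) ≤
          d ⟨m, hm⟩ * Real.sqrt (x ⬝ᵥ (A⁻¹ *ᵥ x))) ∧
      ∃ x : Fin n → ℝ, x ≠ 0 ∧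
        Real.sqrt (((B - Bm) *ᵥ x) ⬝ᵥ (A *ᵥ ((B - Bm) *ᵥ x))) =
          d ⟨m, hm⟩ * Real.sqrt (x ⬝ᵥ (A⁻¹ *ᵥ x))) ∧
    ∀ C : Matrix (Fin n) (Fin n) ℝ, C.rank ≤ m →
      ∃ x : Fin n → ℝ, x ≠ 0 ∧
        d ⟨m, hm⟩ * Real.sqrt (x ⬝ᵥ (A⁻¹ *ᵥ x)) ≤
          Real.sqrt (((B - C) *ᵥ x) ⬝ᵥ (A *ᵥ ((B - C) *ᵥ x))) :=
  stmt_18_general A hA u horth d hd hdpos m hm B Bm hB hBm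
end
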